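/- arXiv:math/0307186 — 4 statements merged into one kernel-verified Lean document; each statement's English description precedes it below -/
import Mathlib

section
/- Let θ = [[0,1],[−1,0]], T(u) = [[1,u],[0,1]], D(v) = [[v,0],[0,v⁻¹]]. For all v₁, v₂, v₃ ∈ ℝ_{>0}, u₁, u₂, u₃ ∈ ℝ, and ε ∈ {+1,−1}: the product θD(v₁)T(u₁)·θD(v₂)T(u₂)·θD(v₃)T(u₃) equals ε·I if and only if u₁ = ε·v₃/(v₁v₂), u₂ = ε·v₁/(v₂v₃), and u₃ = ε·v₂/(v₃v₁). (Hexagon relation: the holonomy around a triangular face of the graph connection is trivial in PSL(2,ℝ) exactly when each corner parameter equals ε times the opposite-side parameter divided by the product of the two adjacent-side parameters, for a single common sign ε.) -/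
/-- The unipotent matrix `T(u) = [[1,u],[0,1]]`. -/
def matT (u : ℝ) : Matrix (Fin 2) (Fin 2) ℝ := !![1, u; 0, 1]

/-- The diagonal matrix `D(v) = [[v,0],[0,v⁻¹]]`. -/
noncomputable def matD (v : ℝ) : Matrix (Fin 2) (Fin 2) ℝ := !![v, 0; 0, v⁻¹]

/-- The Weyl element `θ = [[0,1],[-1,0]]`. -/
def matθ : Matrix (Fin 2) (Fin 2) ℝ := !![0, 1; -1, 0]

/-!
Each factor `θD(v)T(u) = [[0, v⁻¹], [-v, -uv]]` has determinant one, so the relation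
`M₁M₂M₃ = εI` is equivalent to `M₁M₂ = εM₃⁻¹`. Comparing entries, three of the four equations
solve for `u₁`, `u₂`, `u₃`, and the fourth then holds automatically because `ε² = 1`.
-/

theorem mul_eq_smul_one_iff_eq_smul_of_mul_eq_one {R M : Type*} [Monoid M]
    [IsDedekindFiniteMonoid M] [SMul R M] [IsScalarTower R M M] {x c d : M} (hcd : c * d = 1)
    (r : R) : x * c = r • 1 ↔ x = r • d := by
  constructor
  · intro h
    rw [← mul_one x, ← hcd, ← mul_assoc, h, smul_mul_assoc, one_mul]
  · rintro rfl
    rw [smul_mul_assoc, mul_eq_one_comm.mp hcd]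

noncomputable def matθDT (v u : ℝ) : Matrix (Fin 2) (Fin 2) ℝ := matθ * matD v * matT u

theorem matθDT_eq (v u : ℝ) : matθDT v u = !![0, v⁻¹; -v, -(u * v)] := by
  simp [matθDT, matθ, matD, matT]
  ring

theorem matθDT_mul_eq_one {v : ℝ} (hv : v ≠ 0) (u : ℝ) :
    matθDT v u * !![-(u * v), -v⁻¹; v, 0] = 1 := by
  rw [matθDT_eq, Matrix.mul_fin_two, Matrix.one_fin_two]
  simp [hv]
  ring

theorem matθDT_mul_matθDT (v₁ u₁ v₂ u₂ : ℝ) :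
    matθDT v₁ u₁ * matθDT v₂ u₂ =
      !![-(v₂ / v₁), -(u₂ * v₂ / v₁); u₁ * v₁ * v₂, u₁ * u₂ * v₁ * v₂ - v₁ / v₂] := by
  rw [matθDT_eq, matθDT_eq, Matrix.mul_fin_two]
  ext i j
  fin_cases i <;> fin_cases j <;> simp <;> ring

/-- Hexagon relation: for `v₁, v₂, v₃ > 0`, `u₁, u₂, u₃ ∈ ℝ` and `ε ∈ {+1,−1}`, the
product `θD(v₁)T(u₁)·θD(v₂)T(u₂)·θD(v₃)T(u₃)` equals `ε·I` if and only if
`u₁ = ε·v₃/(v₁v₂)`, `u₂ = ε·v₁/(v₂v₃)` and `u₃ = ε·v₂/(v₃v₁)`. -/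
theorem hexagon_relation (v₁ v₂ v₃ : ℝ) (hv₁ : 0 < v₁) (hv₂ : 0 < v₂) (hv₃ : 0 < v₃)
    (u₁ u₂ u₃ ε : ℝ) (hε : ε = 1 ∨ ε = -1) :
    matθ * matD v₁ * matT u₁ * (matθ * matD v₂ * matT u₂) * (matθ * matD v₃ * matT u₃) =
        ε • (1 : Matrix (Fin 2) (Fin 2) ℝ) ↔
      (u₁ = ε * v₃ / (v₁ * v₂) ∧ u₂ = ε * v₁ / (v₂ * v₃) ∧ u₃ = ε * v₂ / (v₃ * v₁)) := by
  have hεε : ε * ε = 1 := by rcases hε with rfl | rfl <;> norm_num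
  change matθDT v₁ u₁ * matθDT v₂ u₂ * matθDT v₃ u₃ = _ ↔ _
  rw [mul_eq_smul_one_iff_eq_smul_of_mul_eq_one (matθDT_mul_eq_one hv₃.ne' u₃),
    matθDT_mul_matθDT, ← Matrix.ext_iff]
  simp only [Fin.forall_fin_two, Matrix.smul_apply, Matrix.of_apply, Matrix.cons_val',
    Matrix.cons_val_zero, Matrix.cons_val_one, Matrix.empty_val', Matrix.cons_val_fin_one,
    smul_eq_mul, neg_inj, mul_neg, mul_zero]
  have h₁ : u₁ * v₁ * v₂ = ε * v₃ ↔ u₁ = ε * v₃ / (v₁ * v₂) := by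
    rw [eq_div_iff (by positivity), mul_assoc]
  have h₂ : u₂ * v₂ / v₁ = ε * v₃⁻¹ ↔ u₂ = ε * v₁ / (v₂ * v₃) := by
    rw [div_eq_iff hv₁.ne', eq_div_iff (by positivity)]
    field_simp
  have h₃ : v₂ / v₁ = ε * (u₃ * v₃) ↔ u₃ = ε * v₂ / (v₃ * v₁) := by
    rw [eq_div_iff (by positivity), div_eq_iff hv₁.ne']
    constructor <;> intro h
    · linear_combination -ε * h - u₃ * v₃ * v₁ * hεε
    · linear_combination -ε * h - v₂ * hεε
  have h₄ : u₁ = ε * v₃ / (v₁ * v₂) → u₂ = ε * v₁ / (v₂ * v₃) →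
      u₁ * u₂ * v₁ * v₂ - v₁ / v₂ = 0 := by
    rintro rfl rfl
    field_simp
    linear_combination v₁ * hεε
  rw [h₁, h₂, h₃]
  tauto
end

section
/- Let θ = [[0,1],[−1,0]], T(u) = [[1,u],[0,1]], D(v) = [[v,0],[0,v⁻¹]]. If v₁, v₂, v₃ ∈ ℝ_{>0} and u₁, u₂, u₃ ∈ ℝ satisfy θD(v₁)T(u₁)·θD(v₂)T(u₂)·θD(v₃)T(u₃) ∈ {I, −I}, then u₁ ≠ 0 and the remaining parameters are determined by v₁, v₂ and u₁ via v₃ = |u₁|·v₁·v₂, u₂ = 1/(u₁·v₂²), and u₃ = 1/(u₁·v₁²). -/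
/-!
Each factor `θD(v)T(u)` equals `[[0, v⁻¹], [-v, -vu]]`, whose inverse is
`[[-uv, -v⁻¹], [v, 0]]`. Moving the third factor to the other side turns the hypothesis into
`θD(v₁)T(u₁)·θD(v₂)T(u₂) = ε·(θD(v₃)T(u₃))⁻¹` with `ε = ±1`, and three entries of this identity
give `v₁v₂u₁ = εv₃`, `u₁u₂v₂² = 1` and `u₁u₃v₁² = 1`, from which everything follows.
-/

lemma matθ_mul_matD_mul_matT (v u : ℝ) :
    matθ * matD v * matT u = !![0, v⁻¹; -v, -(v * u)] := by
  simp [matθ, matD, matT]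

lemma matθ_mul_matD_mul_matT_mul_eq_one {v : ℝ} (hv : v ≠ 0) (u : ℝ) :
    matθ * matD v * matT u * !![-(u * v), -v⁻¹; v, 0] = 1 := by
  rw [matθ_mul_matD_mul_matT, Matrix.mul_fin_two, Matrix.one_fin_two]
  simp [hv, mul_comm v u, ← mul_assoc]

lemma hexagon_relations_of_eq_smul_one {v₁ v₂ v₃ : ℝ} (hv₁ : v₁ ≠ 0) (hv₂ : v₂ ≠ 0)
    (hv₃ : v₃ ≠ 0) {u₁ u₂ u₃ ε : ℝ}
    (h : matθ * matD v₁ * matT u₁ * (matθ * matD v₂ * matT u₂) * (matθ * matD v₃ * matT u₃) =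
      ε • 1) :
    v₁ * v₂ * u₁ = ε * v₃ ∧ u₁ * u₂ * v₂ ^ 2 = 1 ∧ u₁ * u₃ * v₁ ^ 2 = 1 := by
  have h₁₂ : matθ * matD v₁ * matT u₁ * (matθ * matD v₂ * matT u₂) =
      ε • !![-(u₃ * v₃), -v₃⁻¹; v₃, 0] := by
    rw [← smul_one_mul, ← h, Matrix.mul_assoc _ (matθ * matD v₃ * matT u₃),
      matθ_mul_matD_mul_matT_mul_eq_one hv₃, Matrix.mul_one]
  simp only [matθ_mul_matD_mul_matT, Matrix.mul_fin_two, Matrix.smul_of, ← Matrix.ext_iff,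
    Fin.forall_fin_two, mul_zero, mul_neg, zero_add, zero_mul, neg_mul, neg_neg, Matrix.of_apply,
    Matrix.cons_val', Matrix.cons_val_zero, Matrix.cons_val_fin_one, Matrix.smul_cons, smul_eq_mul,
    Matrix.smul_empty, neg_inj, Matrix.cons_val_one] at h₁₂
  obtain ⟨⟨h₀₀, -⟩, h₁₀, h₁₁⟩ := h₁₂
  field_simp at h₀₀ h₁₁
  refine ⟨by linear_combination h₁₀, mul_left_cancel₀ hv₁ ?_, mul_left_cancel₀ hv₂ ?_⟩
  · linear_combination h₁₁
  · linear_combination u₃ * v₁ * h₁₀ - h₀₀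

/-- If `v₁, v₂, v₃ > 0` and `u₁, u₂, u₃ ∈ ℝ` satisfy
`θD(v₁)T(u₁)·θD(v₂)T(u₂)·θD(v₃)T(u₃) ∈ {I, −I}`, then `u₁ ≠ 0` and the remaining
parameters are determined by `v₁, v₂, u₁` via `v₃ = |u₁|·v₁·v₂`, `u₂ = 1/(u₁·v₂²)`
and `u₃ = 1/(u₁·v₁²)`. -/
theorem hexagon_parameters_determined
    (v₁ v₂ v₃ : ℝ) (hv₁ : 0 < v₁) (hv₂ : 0 < v₂) (hv₃ : 0 < v₃) (u₁ u₂ u₃ : ℝ)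
    (hprod :
      matθ * matD v₁ * matT u₁ * (matθ * matD v₂ * matT u₂) * (matθ * matD v₃ * matT u₃) =
          (1 : Matrix (Fin 2) (Fin 2) ℝ) ∨
      matθ * matD v₁ * matT u₁ * (matθ * matD v₂ * matT u₂) * (matθ * matD v₃ * matT u₃) =
          -(1 : Matrix (Fin 2) (Fin 2) ℝ)) :
    u₁ ≠ 0 ∧ v₃ = |u₁| * v₁ * v₂ ∧ u₂ = 1 / (u₁ * v₂ ^ 2) ∧ u₃ = 1 / (u₁ * v₁ ^ 2) := by
  obtain ⟨ε, hε, h⟩ : ∃ ε : ℝ, |ε| = 1 ∧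
      matθ * matD v₁ * matT u₁ * (matθ * matD v₂ * matT u₂) * (matθ * matD v₃ * matT u₃) =
        ε • 1 := by
    rcases hprod with h | h
    exacts [⟨1, abs_one, by rwa [one_smul]⟩, ⟨-1, by simp, by rwa [neg_one_smul]⟩]
  obtain ⟨h₃, h₂, h₁⟩ := hexagon_relations_of_eq_smul_one hv₁.ne' hv₂.ne' hv₃.ne' h
  have hu₁ : u₁ ≠ 0 := by rintro rfl; simp at h₂
  refine ⟨hu₁, ?_, eq_one_div_of_mul_eq_one_left (by linear_combination h₂),
    eq_one_div_of_mul_eq_one_left (by linear_combination h₁)⟩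
  calc v₃ = |ε * v₃| := by rw [abs_mul, hε, one_mul, abs_of_pos hv₃]
    _ = |v₁ * v₂ * u₁| := by rw [h₃]
    _ = |u₁| * v₁ * v₂ := by rw [abs_mul, abs_mul, abs_of_pos hv₁, abs_of_pos hv₂]; ring
end

section
/- Let a, b, c, d, e, e' ∈ ℝ_{>0} and ε₁, ε₂, ε₁', ε₂' ∈ {+1,−1}. The four corner equations relating the two triangulations of an ideal quadrilateral with sides a, b, c, d (diagonal e splitting it into triangles with sides (e,a,b) and (e,c,d) carrying signs ε₁, ε₂; diagonal e' splitting it into triangles with sides (e',d,a) and (e',b,c) carrying signs ε₁', ε₂'), namely: ε₁'·e'/(d·a) = ε₁·b/(e·a) + ε₂·c/(e·d), ε₂'·e'/(b·c) = ε₁·a/(e·b) + ε₂·d/(e·c), ε₁·e/(a·b) = ε₁'·d/(e'·a) + ε₂'·c/(e'·b), and ε₂·e/(c·d) = ε₁'·a/(e'·d) + ε₂'·b/(e'·c), hold simultaneously if and only if ε₁'·ε₂' = ε₁·ε₂ and ε₁'·e·e' = ε₂·a·c + ε₁·b·d. -/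
/-!
Clearing denominators turns each corner equation into a linear relation between
`x = e e'`, `y = a c` and `z = b d`; e.g. the first one becomes `ε₁' x = ε₂ y + ε₁ z`.
Multiplying the two relations with left-hand sides `ε₁' x`, `ε₂' x`, and likewise the two
with `ε₁ x`, `ε₂ x`, and subtracting gives `(ε₁' ε₂' - ε₁ ε₂) (x² + y² + z²) = 0`, so the
sign products agree. Conversely, once they agree, all four relations are multiples of the
first by signs.
-/

theorem div_eq_div_add_div_iff {K : Type*} [Field K] {p q r : K} (hp : p ≠ 0) (hq : q ≠ 0)
    (hr : r ≠ 0) (σ t α u β v : K) :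
    σ * t / (p * q) = α * u / (r * q) + β * v / (r * p) ↔
      σ * r * t = α * u * p + β * v * q := by
  field_simp

section SignedRelations

variable {R : Type*} [CommRing R] {ε₁ ε₂ ε₁' ε₂' x y z : R}

theorem sign_mul_eq_of_corner_relations [LinearOrder R] [IsStrictOrderedRing R]
    (hε₁ : ε₁ * ε₁ = 1) (hε₂ : ε₂ * ε₂ = 1) (hε₁' : ε₁' * ε₁' = 1) (hε₂' : ε₂' * ε₂' = 1)
    (hx : x ≠ 0)
    (h₁ : ε₁' * x = ε₂ * y + ε₁ * z) (h₂ : ε₂' * x = ε₁ * y + ε₂ * z)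
    (h₃ : ε₁ * x = ε₂' * y + ε₁' * z) (h₄ : ε₂ * x = ε₁' * y + ε₂' * z) :
    ε₁' * ε₂' = ε₁ * ε₂ := by
  have hprod : ε₁' * ε₂' * x ^ 2 = ε₁ * ε₂ * (y ^ 2 + z ^ 2) + 2 * y * z := by
    linear_combination ε₂' * x * h₁ + (ε₂ * y + ε₁ * z) * h₂ + y * z * hε₁ + y * z * hε₂
  have hprod' : ε₁ * ε₂ * x ^ 2 = ε₁' * ε₂' * (y ^ 2 + z ^ 2) + 2 * y * z := by
    linear_combination ε₂ * x * h₃ + (ε₂' * y + ε₁' * z) * h₄ + y * z * hε₁' + y * z * hε₂'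
  have hpos : 0 < x ^ 2 + y ^ 2 + z ^ 2 := by positivity
  have hzero : (ε₁' * ε₂' - ε₁ * ε₂) * (x ^ 2 + y ^ 2 + z ^ 2) = 0 := by
    linear_combination hprod - hprod'
  exact sub_eq_zero.mp ((mul_eq_zero.mp hzero).resolve_right hpos.ne')

theorem corner_relations_of_sign_mul_eq
    (hε₁ : ε₁ * ε₁ = 1) (hε₂ : ε₂ * ε₂ = 1) (hε₁' : ε₁' * ε₁' = 1)
    (hs : ε₁' * ε₂' = ε₁ * ε₂) (h₁ : ε₁' * x = ε₂ * y + ε₁ * z) :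
    ε₂' * x = ε₁ * y + ε₂ * z ∧ ε₁ * x = ε₂' * y + ε₁' * z ∧
      ε₂ * x = ε₁' * y + ε₂' * z := by
  refine ⟨?_, ?_, ?_⟩
  · linear_combination -ε₂' * x * hε₁' + ε₁' * x * hs + ε₁ * ε₂ * h₁
      + ε₁ * y * hε₂ + ε₂ * z * hε₁
  · linear_combination -ε₁ * x * hε₁' + ε₁ * ε₁' * h₁
      - ε₁' * y * hs + ε₂' * y * hε₁' + ε₁' * z * hε₁
  · linear_combination -ε₂ * x * hε₁' + ε₂ * ε₁' * h₁
      + ε₁' * y * hε₂ - ε₁' * z * hs + ε₂' * z * hε₁'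

theorem corner_relations_iff [LinearOrder R] [IsStrictOrderedRing R]
    (hε₁ : ε₁ * ε₁ = 1) (hε₂ : ε₂ * ε₂ = 1) (hε₁' : ε₁' * ε₁' = 1) (hε₂' : ε₂' * ε₂' = 1)
    (hx : x ≠ 0) :
    (ε₁' * x = ε₂ * y + ε₁ * z ∧ ε₂' * x = ε₁ * y + ε₂ * z ∧
        ε₁ * x = ε₂' * y + ε₁' * z ∧ ε₂ * x = ε₁' * y + ε₂' * z) ↔
      ε₁' * ε₂' = ε₁ * ε₂ ∧ ε₁' * x = ε₂ * y + ε₁ * z := by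
  constructor
  · rintro ⟨h₁, h₂, h₃, h₄⟩
    exact ⟨sign_mul_eq_of_corner_relations hε₁ hε₂ hε₁' hε₂' hx h₁ h₂ h₃ h₄, h₁⟩
  · rintro ⟨hs, h₁⟩
    exact ⟨h₁, corner_relations_of_sign_mul_eq hε₁ hε₂ hε₁' hs h₁⟩

end SignedRelations

/-- The four corner equations relating the two triangulations of an ideal quadrilateral
with sides `a, b, c, d` (diagonal `e` giving triangles `(e,a,b)`, `(e,c,d)` with signs
`ε₁, ε₂`; diagonal `e'` giving triangles `(e',d,a)`, `(e',b,c)` with signs `ε₁', ε₂'`)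
hold simultaneously if and only if `ε₁'·ε₂' = ε₁·ε₂` and
`ε₁'·e·e' = ε₂·a·c + ε₁·b·d`. -/
theorem corner_equations_iff_flip_relations
    (a b c d e e' : ℝ) (ha : 0 < a) (hb : 0 < b) (hc : 0 < c) (hd : 0 < d)
    (he : 0 < e) (he' : 0 < e') (ε₁ ε₂ ε₁' ε₂' : ℝ)
    (hε₁ : ε₁ = 1 ∨ ε₁ = -1) (hε₂ : ε₂ = 1 ∨ ε₂ = -1)
    (hε₁' : ε₁' = 1 ∨ ε₁' = -1) (hε₂' : ε₂' = 1 ∨ ε₂' = -1) :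
    (ε₁' * e' / (d * a) = ε₁ * b / (e * a) + ε₂ * c / (e * d) ∧
     ε₂' * e' / (b * c) = ε₁ * a / (e * b) + ε₂ * d / (e * c) ∧
     ε₁ * e / (a * b) = ε₁' * d / (e' * a) + ε₂' * c / (e' * b) ∧
     ε₂ * e / (c * d) = ε₁' * a / (e' * d) + ε₂' * b / (e' * c)) ↔
    (ε₁' * ε₂' = ε₁ * ε₂ ∧ ε₁' * e * e' = ε₂ * a * c + ε₁ * b * d) := by
  rw [mul_comm b c, mul_comm a b, div_eq_div_add_div_iff hd.ne' ha.ne' he.ne',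
    div_eq_div_add_div_iff hc.ne' hb.ne' he.ne', div_eq_div_add_div_iff hb.ne' ha.ne' he'.ne',
    div_eq_div_add_div_iff hc.ne' hd.ne' he'.ne']
  have hrel := corner_relations_iff (mul_self_eq_one_iff.mpr hε₁) (mul_self_eq_one_iff.mpr hε₂)
    (mul_self_eq_one_iff.mpr hε₁') (mul_self_eq_one_iff.mpr hε₂') (mul_pos he he').ne'
    (y := a * c) (z := b * d)
  convert hrel using 2 <;> ring_nf
end

section
/- Let n > 4 and label the vertices of a convex n-gon by ℤ/nℤ. Let A be a set of chords such that: (1) for every three distinct vertices, if one of the three chords spanned by them lies in A then at least two of them do; (2) every side {i, i+1} lies in A; and (3) at least one short diagonal {i, i+2} lies in A. Then there exist two pairwise noncrossing diagonals both in A whose complement subdivides the polygon into two triangles and an (n−2)-gon. -/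
/-- `sbtw n a c b`: the vertex `c` lies strictly between `a` and `b` in the
counterclockwise cyclic order on the vertices `ZMod n` of a convex `n`-gon. -/
def sbtw (n : ℕ) (a c b : ZMod n) : Prop :=
  0 < (c - a).val ∧ (c - a).val < (b - a).val

/-- A side of the convex `n`-gon: a chord of the form `{i, i+1}`. -/
def IsSide (n : ℕ) (s : Finset (ZMod n)) : Prop :=
  ∃ i : ZMod n, s = {i, i + 1}

/-- A diagonal: a chord (2-element set of vertices) that is not a side. -/
def IsDiag (n : ℕ) (s : Finset (ZMod n)) : Prop :=
  s.card = 2 ∧ ¬ IsSide n s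

/-- Two chords cross if exactly one endpoint of one of them lies strictly between the
two endpoints of the other in the cyclic order: one endpoint on each of the two open
arcs determined by the other chord. -/
def Cross (n : ℕ) (s t : Finset (ZMod n)) : Prop :=
  ∃ a b c d : ZMod n, s = {a, b} ∧ t = {c, d} ∧ sbtw n a c b ∧ sbtw n b d a

/-!
Start from an admissible short diagonal `{i, i+2}`. The triangles `(i, i+1, i+3)` and
`(i+1, i+2, i+4)` each have an admissible side, so by the closure property each has a second
admissible chord. If `{i, i+3}` is admissible it forms, with `{i, i+2}`, a fan at `i`
cutting off the triangles `(i, i+1, i+2)` and `(i, i+2, i+3)`. Otherwise `{i+1, i+3}` is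
admissible, and the second triangle yields either `{i+1, i+4}` (a fan at `i+1`) or
`{i+2, i+4}`, which together with `{i, i+2}` cuts off two adjacent ears. In each case the two
diagonals share a vertex, hence do not cross.
-/

lemma Finset.pair_eq_pair_iff {α : Type*} [DecidableEq α] {a b c d : α} :
    ({a, b} : Finset α) = {c, d} ↔ (a = c ∧ b = d) ∨ (a = d ∧ b = c) := by
  rw [← Finset.coe_inj, Finset.coe_pair, Finset.coe_pair, Set.pair_eq_pair_iff]

variable {n : ℕ}

lemma Cross.disjoint {s t : Finset (ZMod n)} (h : Cross n s t) : Disjoint s t := by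
  obtain ⟨a, b, c, d, rfl, rfl, ⟨hca, hcb⟩, ⟨hdb, hda⟩⟩ := h
  have hc : c ≠ a ∧ c ≠ b := by
    constructor <;> rintro rfl <;> simp at hca hcb
  have hd : d ≠ b ∧ d ≠ a := by
    constructor <;> rintro rfl <;> simp at hdb hda
  simp only [Finset.disjoint_insert_right, Finset.mem_insert, Finset.mem_singleton,
    Finset.disjoint_singleton_right]
  tauto

lemma not_cross_of_mem_of_mem {s t : Finset (ZMod n)} {v : ZMod n} (hs : v ∈ s) (ht : v ∈ t) :
    ¬ Cross n s t := fun h => Finset.disjoint_left.1 h.disjoint hs ht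

lemma isDiag_pair_add (j c : ZMod n) (hc : 2 ≤ c.val) (hcn : c.val + 2 ≤ n) :
    IsDiag n {j, j + c} := by
  have : NeZero n := ⟨by omega⟩
  have : Fact (1 < n) := ⟨by omega⟩
  have hc0 : c ≠ 0 := by rintro rfl; simp at hc
  refine ⟨Finset.card_pair (by simpa using hc0), ?_⟩
  rintro ⟨i, hi⟩
  rcases Finset.pair_eq_pair_iff.1 hi with ⟨rfl, h⟩ | ⟨rfl, h⟩
  · have : c = 1 := by simpa using h
    simp [this, ZMod.val_one] at hc
  · have : c = -1 := by linear_combination h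
    rw [this, ZMod.neg_val', ZMod.val_one, Nat.mod_eq_of_lt (by omega)] at hcn
    omega

lemma add_natCast_ne_add_natCast (j : ZMod n) {a b : ℕ} (ha : a < n) (hb : b < n)
    (hab : a ≠ b) : j + a ≠ j + b := by
  rw [Ne, add_right_inj]
  intro h
  exact hab (by simpa [Nat.mod_eq_of_lt ha, Nat.mod_eq_of_lt hb] using congrArg ZMod.val h)

def HasDiagonalsCuttingTwoTriangles (n : ℕ) (A : Set (Finset (ZMod n))) : Prop :=
  ∃ d₁ d₂ : Finset (ZMod n), d₁ ∈ A ∧ d₂ ∈ A ∧ IsDiag n d₁ ∧ IsDiag n d₂ ∧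
    d₁ ≠ d₂ ∧ ¬ Cross n d₁ d₂ ∧
    ∃ w x y z : ZMod n, d₁ = {w, x} ∧ d₂ = {y, z} ∧
      (x - w).val + (y - x).val + (z - y).val + (w - z).val = n ∧
      (((x - w).val + 1 = 3 ∧ (z - y).val + 1 = 3 ∧
          (y - x).val + (w - z).val + 2 = n - 2) ∨
       ((x - w).val + 1 = 3 ∧ (y - x).val + (w - z).val + 2 = 3 ∧
          (z - y).val + 1 = n - 2) ∨
       ((z - y).val + 1 = 3 ∧ (y - x).val + (w - z).val + 2 = 3 ∧
          (x - w).val + 1 = n - 2))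

section TwoTriangles

variable {A : Set (Finset (ZMod n))} (hn : 4 < n) (j : ZMod n)
include hn

lemma hasDiagonalsCuttingTwoTriangles_of_fan (h₂ : {j, j + 2} ∈ A) (h₃ : {j, j + 3} ∈ A) :
    HasDiagonalsCuttingTwoTriangles n A := by
  have : NeZero n := ⟨by omega⟩
  have : Fact (1 < n) := ⟨by omega⟩
  have v₂ : (2 : ZMod n).val = 2 := ZMod.val_ofNat_of_lt (show 2 < n by omega)
  have v₃ : (3 : ZMod n).val = 3 := ZMod.val_ofNat_of_lt (show 3 < n by omega)
  have hne : ({j, j + 2} : Finset (ZMod n)) ≠ {j, j + 3} := by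
    intro h
    rcases Finset.pair_eq_pair_iff.1 h with ⟨-, h⟩ | ⟨h, -⟩
    · exact add_natCast_ne_add_natCast j (a := 2) (b := 3) (by omega) (by omega) (by omega)
        (by simpa using h)
    · exact add_natCast_ne_add_natCast j (a := 0) (b := 3) (by omega) (by omega) (by omega)
        (by simpa using h)
  refine ⟨_, _, h₂, h₃, isDiag_pair_add j 2 (by omega) (by omega),
    isDiag_pair_add j 3 (by omega) (by omega), hne,
    not_cross_of_mem_of_mem (v := j) (by simp) (by simp),
    j, j + 2, j + 3, j, rfl, Finset.pair_comm _ _, ?_⟩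
  have v₁ : (3 - 2 : ZMod n).val = 1 := by norm_num [ZMod.val_one]
  simp only [add_sub_cancel_left, add_sub_add_left_eq_sub, sub_add_cancel_left, sub_self,
    ZMod.val_zero, true_and, v₁, v₂, ZMod.neg_val', v₃, Nat.mod_eq_of_lt (show n - 3 < n by omega)]
  omega

lemma hasDiagonalsCuttingTwoTriangles_of_adjacent (h₀ : {j, j + 2} ∈ A)
    (h₂ : {j + 2, j + 4} ∈ A) : HasDiagonalsCuttingTwoTriangles n A := by
  have : NeZero n := ⟨by omega⟩
  have v₂ : (2 : ZMod n).val = 2 := ZMod.val_ofNat_of_lt (show 2 < n by omega)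
  have v₄ : (4 : ZMod n).val = 4 := ZMod.val_ofNat_of_lt (show 4 < n by omega)
  have hj4 : j + 4 = j + 2 + 2 := by ring
  have hne : ({j, j + 2} : Finset (ZMod n)) ≠ {j + 2, j + 4} := by
    intro h
    rcases Finset.pair_eq_pair_iff.1 h with ⟨h, -⟩ | ⟨h, -⟩
    · exact add_natCast_ne_add_natCast j (a := 0) (b := 2) (by omega) (by omega) (by omega)
        (by simpa using h)
    · exact add_natCast_ne_add_natCast j (a := 0) (b := 4) (by omega) (by omega) (by omega)
        (by simpa using h)
  refine ⟨_, _, h₀, h₂, isDiag_pair_add j 2 (by omega) (by omega),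
    hj4 ▸ isDiag_pair_add (j + 2) 2 (by omega) (by omega), hne,
    not_cross_of_mem_of_mem (v := j + 2) (by simp) (by simp),
    j, j + 2, j + 2, j + 4, rfl, rfl, ?_⟩
  have v₂' : (4 - 2 : ZMod n).val = 2 := by norm_num [v₂]
  simp only [add_sub_cancel_left, add_sub_add_left_eq_sub, sub_add_cancel_left, sub_self,
    ZMod.val_zero, true_and, v₂, v₂', ZMod.neg_val', v₄, Nat.mod_eq_of_lt (show n - 4 < n by omega)]
  omega

end TwoTriangles

lemma mem_or_mem_of_side_mem (hn : 3 < n) {A : Set (Finset (ZMod n))}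
    (h1 : ∀ i j k : ZMod n, i ≠ j → j ≠ k → i ≠ k →
      ({i, j} ∈ A ∨ {j, k} ∈ A ∨ {i, k} ∈ A) →
      (({i, j} ∈ A ∧ {j, k} ∈ A) ∨ ({j, k} ∈ A ∧ {i, k} ∈ A) ∨
        ({i, j} ∈ A ∧ {i, k} ∈ A)))
    (h2 : ∀ i : ZMod n, {i, i + 1} ∈ A) (j : ZMod n) :
    {j + 1, j + 3} ∈ A ∨ {j, j + 3} ∈ A := by
  have := h1 j (j + 1) (j + 3)
    (by simpa using add_natCast_ne_add_natCast j (a := 0) (b := 1) (by omega) (by omega) (by omega))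
    (by simpa using add_natCast_ne_add_natCast j (a := 1) (b := 3) (by omega) (by omega) (by omega))
    (by simpa using add_natCast_ne_add_natCast j (a := 0) (b := 3) (by omega) (by omega) (by omega))
    (Or.inl (h2 j))
  tauto

/-- Let `n > 4` and let `A` be a set of chords of a convex `n`-gon with vertices
`ZMod n` such that: (1) for every three distinct vertices, if one of the three chords
they span lies in `A` then at least two of them do; (2) every side lies in `A`; and
(3) at least one short diagonal `{i, i+2}` lies in `A`.  Then there exist two distinct
noncrossing diagonals, both in `A`, whose complement subdivides the polygon into two
triangles and an `(n−2)`-gon: the diagonals can be written `{w,x}` and `{y,z}` with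
`w, x, y, z` in counterclockwise cyclic order (the gaps `x−w`, `y−x`, `z−y`, `w−z`
summing to `n`), the three regions they cut out having `(x−w)+1`, `(z−y)+1` and
`(y−x)+(w−z)+2` sides, two of which equal `3` and the third `n−2`. -/
theorem two_noncrossing_admissible_diagonals_cutting_two_triangles
    (n : ℕ) (hn : 4 < n) (A : Set (Finset (ZMod n)))
    (h1 : ∀ i j k : ZMod n, i ≠ j → j ≠ k → i ≠ k →
      ({i, j} ∈ A ∨ {j, k} ∈ A ∨ {i, k} ∈ A) →
      (({i, j} ∈ A ∧ {j, k} ∈ A) ∨ ({j, k} ∈ A ∧ {i, k} ∈ A) ∨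
        ({i, j} ∈ A ∧ {i, k} ∈ A)))
    (h2 : ∀ i : ZMod n, {i, i + 1} ∈ A)
    (h3 : ∃ i : ZMod n, {i, i + 2} ∈ A) :
    ∃ d₁ d₂ : Finset (ZMod n), d₁ ∈ A ∧ d₂ ∈ A ∧ IsDiag n d₁ ∧ IsDiag n d₂ ∧
      d₁ ≠ d₂ ∧ ¬ Cross n d₁ d₂ ∧
      ∃ w x y z : ZMod n, d₁ = {w, x} ∧ d₂ = {y, z} ∧
        (x - w).val + (y - x).val + (z - y).val + (w - z).val = n ∧
        (((x - w).val + 1 = 3 ∧ (z - y).val + 1 = 3 ∧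
            (y - x).val + (w - z).val + 2 = n - 2) ∨
         ((x - w).val + 1 = 3 ∧ (y - x).val + (w - z).val + 2 = 3 ∧
            (z - y).val + 1 = n - 2) ∨
         ((z - y).val + 1 = 3 ∧ (y - x).val + (w - z).val + 2 = 3 ∧
            (x - w).val + 1 = n - 2)) := by
  obtain ⟨i, hi⟩ := h3
  rcases mem_or_mem_of_side_mem (by omega) h1 h2 i with h13 | h03
  · rcases mem_or_mem_of_side_mem (by omega) h1 h2 (i + 1) with h24 | h14
    · rw [show i + 1 + 1 = i + 2 by ring, show i + 1 + 3 = i + 4 by ring] at h24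
      exact hasDiagonalsCuttingTwoTriangles_of_adjacent hn i hi h24
    · rw [show i + 3 = i + 1 + 2 by ring] at h13
      exact hasDiagonalsCuttingTwoTriangles_of_fan hn (i + 1) h13 h14
  · exact hasDiagonalsCuttingTwoTriangles_of_fan hn i hi h03
end
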